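/- In a finite concurrent reachability game with value vector m (the least fixed point of Δ), let G ⊆ Q be a set of states such that no state of Q∖G has value 0 (i.e. (Q∖G) ∩ m⁻¹[0] = ∅), and let ε > 0. Then there exists a valuation v ∈ [0,1]^Q such that v ⪯ m, ‖m − v‖_∞ ≤ ε, v agrees with m on G, and for every q ∈ Q∖G, Δ(v)(q) = val_{⟨F_q, μ_v⟩} > v(q). -/

import Mathlib

open scoped BigOperators Classical

noncomputable section

/-- A probability distribution on a finite type. -/
def FDist (X : Type) [Fintype X] : Type :=
  { p : X → ℝ // (∀ x, 0 ≤ p x) ∧ ∑ x, p x = 1 }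

namespace CRG

variable {A B Q D : Type} [Fintype A] [Fintype B] [Fintype Q] [Fintype D]

/-- The support of a distribution. -/
def supp {X : Type} [Fintype X] (σ : FDist X) : Set X := { x | σ.1 x ≠ 0 }

/-- The Dirac distribution. -/
def dirac {X : Type} [Fintype X] [DecidableEq X] (x : X) : FDist X :=
  ⟨fun y => if y = x then 1 else 0, by
    constructor
    · intro y
      dsimp only
      split <;> norm_num
    · simp⟩

/-- Outcome of a pair of mixed strategies in the game in normal form with payoff `u`. -/
def out (u : A → B → ℝ) (σA : FDist A) (σB : FDist B) : ℝ :=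
  ∑ a, ∑ b, σA.1 a * σB.1 b * u a b

/-- Outcome of a mixed strategy of Player A against a pure action of Player B. -/
def outB (u : A → B → ℝ) (σA : FDist A) (b : B) : ℝ :=
  ∑ a, σA.1 a * u a b

/-- The value of a Player A mixed strategy in a game in normal form. -/
def valStratGF (u : A → B → ℝ) (σA : FDist A) : ℝ :=
  ⨅ σB : FDist B, out u σA σB

/-- The (von Neumann) value of a finite game in normal form. -/
def valGF (u : A → B → ℝ) : ℝ :=
  ⨆ σA : FDist A, valStratGF u σA

/-- The optimal Player A mixed strategies in a game in normal form. -/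
def OptA (u : A → B → ℝ) : Set (FDist A) := { σA | valStratGF u σA = valGF u }

/-- The optimal actions of Player B against the Player A mixed strategy `σA`. -/
def optActs (u : A → B → ℝ) (σA : FDist A) : Set B :=
  { b | outB u σA b = valStratGF u σA }

/-- μ_v : the lift of a valuation of the states to the Nature states. -/
def lift (dist : D → FDist Q) (v : Q → ℝ) (d : D) : ℝ := ∑ q, (dist d).1 q * v q

/-- The payoff function of the local interaction `F_q` valued by `μ_m`. -/
def locPay (δ : Q → A → B → D) (dist : D → FDist Q) (m : Q → ℝ) (q : Q) : A → B → ℝ :=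
  fun a b => lift dist m (δ q a b)

/-- One-step transition probability between states. -/
def step (δ : Q → A → B → D) (dist : D → FDist Q) (σA : FDist A) (σB : FDist B)
    (q q' : Q) : ℝ :=
  ∑ a, ∑ b, σA.1 a * σB.1 b * (dist (δ q a b)).1 q'

/-- The operator Δ on valuations of the states. -/
def Δop (δ : Q → A → B → D) (dist : D → FDist Q) (T : Q) (v : Q → ℝ) : Q → ℝ :=
  fun q => if q = T then 1 else valGF (fun a b => lift dist v (δ q a b))

/-- The target `T` is an absorbing (self-looping) sink. -/
def Absorbing (δ : Q → A → B → D) (dist : D → FDist Q) (T : Q) : Prop :=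
  ∀ a b, (dist (δ T a b)).1 = fun q => if q = T then 1 else 0

/-- `m` is the least fixed point of Δ on `[0,1]^Q`. -/
def IsLfpDelta (δ : Q → A → B → D) (dist : D → FDist Q) (T : Q) (m : Q → ℝ) : Prop :=
  (∀ q, m q ∈ Set.Icc (0:ℝ) 1) ∧ Δop δ dist T m = m ∧
    ∀ v : Q → ℝ, (∀ q, v q ∈ Set.Icc (0:ℝ) 1) → Δop δ dist T v = v → ∀ q, m q ≤ v q

/-- A strategy: a history of past states together with the current state gives a
mixed action.  (This encodes maps `Q⁺ → 𝒟(X)`.) -/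
def Strat (Q X : Type) [Fintype X] : Type := List Q → Q → FDist X

/-- Residual strategy after the history `π` has been played. -/
def residual {X : Type} [Fintype X] (s : Strat Q X) (π : List Q) : Strat Q X :=
  fun h q => s (π ++ h) q

/-- The (positional) strategy associated with a per-state choice of mixed actions. -/
def ofPos {X : Type} [Fintype X] (s : Q → FDist X) : Strat Q X := fun _ q => s q

/-- Probability of reaching the set `S` within `n` steps from current state `q`,
history `h` having been played. -/
def reachSetNAux (δ : Q → A → B → D) (dist : D → FDist Q) (S : Set Q) :
    ℕ → Strat Q A → Strat Q B → List Q → Q → ℝ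
  | 0, _, _, _, q => if q ∈ S then 1 else 0
  | n + 1, sA, sB, h, q =>
      if q ∈ S then 1
      else ∑ q', step δ dist (sA h q) (sB h q) q q' *
        reachSetNAux δ dist S n sA sB (h ++ [q]) q'

/-- Probability of reaching the set `S` within `n` steps from state `q`. -/
def reachSetN (δ : Q → A → B → D) (dist : D → FDist Q) (S : Set Q) (n : ℕ)
    (sA : Strat Q A) (sB : Strat Q B) (q : Q) : ℝ :=
  reachSetNAux δ dist S n sA sB [] q

/-- Probability of reaching the target `T` within `n` steps from state `q`. -/
def reachN (δ : Q → A → B → D) (dist : D → FDist Q) (T : Q) (n : ℕ)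
    (sA : Strat Q A) (sB : Strat Q B) (q : Q) : ℝ :=
  reachSetN δ dist {T} n sA sB q

/-- Probability of eventually reaching the target `T` from state `q`. -/
def reach (δ : Q → A → B → D) (dist : D → FDist Q) (T : Q)
    (sA : Strat Q A) (sB : Strat Q B) (q : Q) : ℝ :=
  ⨆ n : ℕ, reachN δ dist T n sA sB q

/-- The value of a Player A strategy from state `q`. -/
def valA (δ : Q → A → B → D) (dist : D → FDist Q) (T : Q) (sA : Strat Q A) (q : Q) : ℝ :=
  ⨅ sB : Strat Q B, reach δ dist T sA sB q

/-- The value of the game from state `q`. -/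
def value (δ : Q → A → B → D) (dist : D → FDist Q) (T : Q) (q : Q) : ℝ :=
  ⨆ sA : Strat Q A, valA δ dist T sA q

/-- A state is maximizable when Player A has an optimal strategy from it. -/
def Maximizable (δ : Q → A → B → D) (dist : D → FDist Q) (T q : Q) : Prop :=
  ∃ sA : Strat Q A, valA δ dist T sA q = value δ dist T q

/-- A positional Player A strategy locally dominates the valuation `v`. -/
def LocallyDominates (δ : Q → A → B → D) (dist : D → FDist Q)
    (sA : Q → FDist A) (v : Q → ℝ) : Prop :=
  ∀ q, v q ≤ valStratGF (fun a b => lift dist v (δ q a b)) (sA q)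

/-- Transition function ι of the MDP induced by a positional Player A strategy. -/
def stepB [DecidableEq B] (δ : Q → A → B → D) (dist : D → FDist Q)
    (sA : Q → FDist A) (q : Q) (b : B) (q' : Q) : ℝ :=
  step δ dist (sA q) (dirac b) q q'

/-- An end component of the MDP induced by the positional Player A strategy `sA`. -/
structure EndComp [DecidableEq B] (δ : Q → A → B → D) (dist : D → FDist Q)
    (sA : Q → FDist A) where
  states : Set Q
  acts : Q → Set B
  acts_nonempty : ∀ q ∈ states, (acts q).Nonempty
  closed : ∀ q ∈ states, ∀ b ∈ acts q, ∀ q', stepB δ dist sA q b q' ≠ 0 → q' ∈ states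
  connected : ∀ q ∈ states, ∀ q' ∈ states,
    Relation.ReflTransGen
      (fun x y => x ∈ states ∧ ∃ b ∈ acts x, stepB δ dist sA x b y ≠ 0) q q'

/-- `S_D` : the Nature states having a non-zero probability to reach `S`. -/
def natS (dist : D → FDist Q) (S : Set Q) : Set D :=
  { d | ∃ q ∈ S, (dist d).1 q ≠ 0 }

/-- Progressive optimal local strategies at `q` w.r.t. the set `Gd`. -/
def Prog (δ : Q → A → B → D) (dist : D → FDist Q) (m : Q → ℝ) (q : Q)
    (Gd : Set Q) : Set (FDist A) :=
  { σA | σA ∈ OptA (locPay δ dist m q) ∧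
      ∀ b ∈ optActs (locPay δ dist m q) σA, ∃ a ∈ supp σA, δ q a b ∈ natS dist Gd }

/-- Risky optimal local strategies at `q` w.r.t. the set `Bd`. -/
def Risk (δ : Q → A → B → D) (dist : D → FDist Q) (m : Q → ℝ) (q : Q)
    (Bd : Set Q) : Set (FDist A) :=
  { σA | σA ∈ OptA (locPay δ dist m q) ∧
      ∃ b ∈ optActs (locPay δ dist m q) σA, ∃ a ∈ supp σA, δ q a b ∈ natS dist Bd }

/-- Efficient local strategies: progressive and not risky. -/
def Eff (δ : Q → A → B → D) (dist : D → FDist Q) (m : Q → ℝ) (q : Q)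
    (Gd Bd : Set Q) : Set (FDist A) :=
  Prog δ dist m q Gd \ Risk δ dist m q Bd

/-- The increasing sequence of sets of secure states w.r.t. `Bd`. -/
def SecN (δ : Q → A → B → D) (dist : D → FDist Q) (m : Q → ℝ) (T : Q) (Bd : Set Q) :
    ℕ → Set Q
  | 0 => {T}
  | n + 1 => SecN δ dist m T Bd n ∪
      { q | q ∉ Bd ∧ (Eff δ dist m q (SecN δ dist m T Bd n) Bd).Nonempty }

/-- The set of secure states w.r.t. `Bd`. -/
def Sec (δ : Q → A → B → D) (dist : D → FDist Q) (m : Q → ℝ) (T : Q) (Bd : Set Q) :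
    Set Q :=
  (⋃ n : ℕ, SecN δ dist m T Bd n) ∪ { q | m q = 0 }

/-- The sequence of sets of bad states. -/
def BadN (δ : Q → A → B → D) (dist : D → FDist Q) (m : Q → ℝ) (T : Q) : ℕ → Set Q
  | 0 => ∅
  | n + 1 => (Sec δ dist m T (BadN δ dist m T n))ᶜ

/-- The set of bad states. -/
def Bad (δ : Q → A → B → D) (dist : D → FDist Q) (m : Q → ℝ) (T : Q) : Set Q :=
  BadN δ dist m T (Fintype.card Q)

/-- `α[y]` : the total valuation extending the partial valuation `α : O∖E → [0,1]`
with the value `y` on `E`. -/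
def extendVal {O : Type} (E : Set O) (α : O → ℝ) (y : ℝ) : O → ℝ :=
  fun o => if o ∈ E then y else α o

/-- The map `f_α : y ↦ val_{⟨F, α[y]⟩}`. -/
def fval {O : Type} (ρ : A → B → O) (E : Set O) (α : O → ℝ) (y : ℝ) : ℝ :=
  valGF (fun a b => extendVal E α y (ρ a b))

/-- `v` is the least fixed point of `f_α` on `[0,1]`. -/
def IsLfpVal {O : Type} (ρ : A → B → O) (E : Set O) (α : O → ℝ) (v : ℝ) : Prop :=
  v ∈ Set.Icc (0:ℝ) 1 ∧ fval ρ E α v = v ∧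
    ∀ y ∈ Set.Icc (0:ℝ) 1, fval ρ E α y = y → v ≤ y

/-- The game form `ρ` is reach-maximizable w.r.t. the partial valuation `α : O∖E → [0,1]`. -/
def RMwrt {O : Type} (ρ : A → B → O) (E : Set O) (α : O → ℝ) : Prop :=
  ∀ v : ℝ, IsLfpVal ρ E α v →
    v = 0 ∨
      ∃ σA ∈ OptA (fun a b => extendVal E α v (ρ a b)),
        ∀ b ∈ optActs (fun a b => extendVal E α v (ρ a b)) σA,
          ∃ a ∈ supp σA, ρ a b ∉ E

/-- A reach-maximizable game form: RM w.r.t. every partial valuation of its outcomes. -/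
def RMform {O : Type} (ρ : A → B → O) : Prop :=
  ∀ (E : Set O) (α : O → ℝ), (∀ o ∉ E, α o ∈ Set.Icc (0:ℝ) 1) → RMwrt ρ E α

/-- A determined game form. -/
def Determined {O : Type} (ρ : A → B → O) : Prop :=
  ∀ E : Set O, (∃ a, ∀ b, ρ a b ∈ E) ∨ (∃ b, ∀ a, ρ a b ∉ E)

/-- Transition function of the three-state reachability game `C_{(F,α)}`:
state `0` is `q₀`, state `1` is the target `⊤`, state `2` is the bin `⊥`. -/
def triδ {O : Type} (ρ : A → B → O) (E : Set O) :
    Fin 3 → A → B → (Fin 3 ⊕ {o : O // o ∉ E}) :=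
  fun s a b =>
    if s = 0 then
      if h : ρ a b ∈ E then Sum.inl 0 else Sum.inr ⟨ρ a b, h⟩
    else Sum.inl s

/-- Nature distributions of the three-state reachability game `C_{(F,α)}`. -/
def triDist {O : Type} (E : Set O) (α : O → ℝ)
    (hα : ∀ o ∉ E, α o ∈ Set.Icc (0:ℝ) 1) :
    (Fin 3 ⊕ {o : O // o ∉ E}) → FDist (Fin 3) := fun d =>
  match d with
  | Sum.inl t => dirac t
  | Sum.inr x =>
      ⟨![0, α x.1, 1 - α x.1], by
        obtain ⟨h0, h1⟩ := hα x.1 x.2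
        constructor
        · intro s
          fin_cases s <;> simp <;> linarith
        · simp [Fin.sum_univ_three]⟩

/-- An abstract (finite) game form with actions `A` and `B`. -/
structure GameForm (A B : Type) where
  O : Type
  fin : Fintype O
  ρ : A → B → O

/-- All local interactions of the arena `δ` belong to the set `𝒢` of game forms
(up to a renaming of the outcomes into Nature states). -/
def UsesForms {Q D : Type} (𝒢 : Set (GameForm A B)) (δ : Q → A → B → D) : Prop :=
  ∀ q, ∃ F ∈ 𝒢, ∃ g : F.O → D, δ q = fun a b => g (F.ρ a b)

/-- The sequence of iterates of Δ starting from the valuation `1_{⊤}`. -/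
def vseq (δ : Q → A → B → D) (dist : D → FDist Q) (T : Q) : ℕ → Q → ℝ
  | 0 => fun q => if q = T then 1 else 0
  | n + 1 => Δop δ dist T (vseq δ dist T n)

/-- Relevant paths w.r.t. the strategy `sA` from the state `q₀`: the pair `(h, q)`
encodes the path `h · q` (history `h`, current state `q`). -/
inductive Relevant [DecidableEq B] (δ : Q → A → B → D) (dist : D → FDist Q)
    (m : Q → ℝ) (sA : Strat Q A) (q₀ : Q) : List Q → Q → Prop
  | base : Relevant δ dist m sA q₀ [] q₀
  | step {h : List Q} {q q' : Q} :
      Relevant δ dist m sA q₀ h q →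
      (∃ b ∈ optActs (locPay δ dist m q) (sA h q),
        0 < CRG.step δ dist (sA h q) (dirac b) q q') →
      Relevant δ dist m sA q₀ (h ++ [q]) q'

end CRG

/-!
The Kleene iterates `Δⁿ(0)` increase to `m`, and `Δ` is monotone and `1`-Lipschitz for the sup
norm. Hence for `c < 1` the operator that pins a valuation to `m` on `G` and replaces it by
`c • Δ(v)` off `G` is a monotone contraction; its fixed point `v` lies below `m` and above every
`cⁿ • Δⁿ(0)`. Choosing `N` with `Δᴺ(0)` within `ε/2` of `m`, and then `c` so close to `1` that
`cᴺ > 1 - ε/2`, makes `v` `ε`-close to `m`. Off `G`, `m > 0` forces `v > 0`, and then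
`v = c • Δ(v) < Δ(v)`.
-/

open Filter Topology

namespace ContractingWith

variable {α : Type*} [MetricSpace α] [Nonempty α] [CompleteSpace α] [Preorder α]
  {K : NNReal} {f : α → α}

lemma fixedPoint_le_of_map_le [ClosedIicTopology α] (hf : ContractingWith K f)
    (hmono : Monotone f) {x : α} (hx : f x ≤ x) : fixedPoint f hf ≤ x :=
  le_of_tendsto' (hf.tendsto_iterate_fixedPoint x) fun n =>
    hmono.antitone_iterate_of_map_le hx (Nat.zero_le n)

lemma le_fixedPoint_of_le_map [ClosedIciTopology α] (hf : ContractingWith K f)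
    (hmono : Monotone f) {x : α} (hx : x ≤ f x) : x ≤ fixedPoint f hf :=
  ge_of_tendsto' (hf.tendsto_iterate_fixedPoint x) fun n =>
    hmono.monotone_iterate_of_le_map hx (Nat.zero_le n)

end ContractingWith

namespace CRG

instance {X : Type} [Fintype X] [Nonempty X] : Nonempty (FDist X) :=
  ⟨dirac (Classical.arbitrary X)⟩

section MatrixGame

variable {A B : Type} [Fintype A] [Fintype B]

lemma out_mono {u u' : A → B → ℝ} (h : u ≤ u') (σA : FDist A) (σB : FDist B) :
    out u σA σB ≤ out u' σA σB := by
  unfold out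
  gcongr with a _ b _
  · exact mul_nonneg (σA.2.1 a) (σB.2.1 b)
  · exact h a b

lemma out_add_const (u : A → B → ℝ) (c : ℝ) (σA : FDist A) (σB : FDist B) :
    out (fun a b => u a b + c) σA σB = out u σA σB + c := by
  simp only [out, mul_add, Finset.sum_add_distrib, mul_comm _ c, mul_assoc, ← Finset.mul_sum,
    σB.2.2, σA.2.2, mul_one]

lemma out_smul (c : ℝ) (u : A → B → ℝ) (σA : FDist A) (σB : FDist B) :
    out (fun a b => c * u a b) σA σB = c * out u σA σB := by
  simp only [out, Finset.mul_sum]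
  exact Finset.sum_congr rfl fun a _ => Finset.sum_congr rfl fun b _ => by ring

lemma out_const (c : ℝ) (σA : FDist A) (σB : FDist B) : out (fun _ _ => c) σA σB = c := by
  simpa [out] using out_add_const 0 c σA σB

lemma bddBelow_range_out (u : A → B → ℝ) (σA : FDist A) :
    BddBelow (Set.range (out u σA)) := by
  obtain ⟨c, hc⟩ := Finite.bddBelow_range fun p : A × B => u p.1 p.2
  refine ⟨c, Set.forall_mem_range.2 fun σB => ?_⟩
  rw [← out_const c σA σB]
  exact out_mono (fun a b => hc ⟨(a, b), rfl⟩) σA σB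

lemma valStratGF_le_out (u : A → B → ℝ) (σA : FDist A) (σB : FDist B) :
    valStratGF u σA ≤ out u σA σB :=
  ciInf_le (bddBelow_range_out u σA) σB

lemma valStratGF_mono {u u' : A → B → ℝ} (h : u ≤ u') (σA : FDist A) :
    valStratGF u σA ≤ valStratGF u' σA :=
  ciInf_mono (bddBelow_range_out u σA) fun σB => out_mono h σA σB

lemma valStratGF_smul {c : ℝ} (hc : 0 ≤ c) (u : A → B → ℝ) (σA : FDist A) :
    valStratGF (fun a b => c * u a b) σA = c * valStratGF u σA := by
  simp only [valStratGF, out_smul, Real.mul_iInf_of_nonneg hc]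

lemma valGF_smul {c : ℝ} (hc : 0 ≤ c) (u : A → B → ℝ) :
    valGF (fun a b => c * u a b) = c * valGF u := by
  simp only [valGF, valStratGF_smul hc, Real.mul_iSup_of_nonneg hc]

variable [Nonempty B]

lemma valStratGF_add_const (u : A → B → ℝ) (c : ℝ) (σA : FDist A) :
    valStratGF (fun a b => u a b + c) σA = valStratGF u σA + c := by
  simp only [valStratGF, out_add_const]
  exact ((OrderIso.addRight c).map_ciInf (bddBelow_range_out u σA)).symm

lemma bddAbove_range_valStratGF (u : A → B → ℝ) :
    BddAbove (Set.range (valStratGF u)) := by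
  obtain ⟨c, hc⟩ := Finite.bddAbove_range fun p : A × B => u p.1 p.2
  let σB : FDist B := Classical.arbitrary _
  refine ⟨c, Set.forall_mem_range.2 fun σA => (valStratGF_le_out u σA σB).trans ?_⟩
  rw [← out_const c σA σB]
  exact out_mono (fun a b => hc ⟨(a, b), rfl⟩) σA σB

lemma valGF_mono {u u' : A → B → ℝ} (h : u ≤ u') : valGF u ≤ valGF u' :=
  ciSup_mono (bddAbove_range_valStratGF u') fun σA => valStratGF_mono h σA

lemma valGF_add_const [Nonempty A] (u : A → B → ℝ) (c : ℝ) :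
    valGF (fun a b => u a b + c) = valGF u + c := by
  simp only [valGF, valStratGF_add_const]
  exact ((OrderIso.addRight c).map_ciSup (bddAbove_range_valStratGF u)).symm

lemma valGF_const [Nonempty A] (c : ℝ) : valGF (fun (_ : A) (_ : B) => c) = c := by
  simp only [valGF, valStratGF, out_const, ciInf_const, ciSup_const]

end MatrixGame

section Lift

variable {Q D : Type} [Fintype Q] (dist : D → FDist Q)

lemma lift_mono {v w : Q → ℝ} (h : v ≤ w) (d : D) : lift dist v d ≤ lift dist w d :=
  Finset.sum_le_sum fun q _ => mul_le_mul_of_nonneg_left (h q) ((dist d).2.1 q)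

lemma lift_add_const (v : Q → ℝ) (c : ℝ) (d : D) :
    lift dist (fun q => v q + c) d = lift dist v d + c := by
  simp only [lift, mul_add, Finset.sum_add_distrib, ← Finset.sum_mul, (dist d).2.2, one_mul]

lemma lift_smul (c : ℝ) (v : Q → ℝ) (d : D) : lift dist (c • v) d = c * lift dist v d := by
  simp only [lift, Pi.smul_apply, smul_eq_mul, Finset.mul_sum]
  exact Finset.sum_congr rfl fun q _ => by ring

lemma lift_zero (d : D) : lift dist 0 d = 0 := by
  simp [lift]

end Lift

section Delta

variable {A B Q D : Type} [Fintype A] [Fintype B] [Fintype Q]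
  {δ : Q → A → B → D} {dist : D → FDist Q} {T : Q}

lemma Δop_self (v : Q → ℝ) : Δop δ dist T v T = 1 :=
  if_pos rfl

lemma Δop_of_ne {q : Q} (hq : q ≠ T) (v : Q → ℝ) :
    Δop δ dist T v q = valGF fun a b => lift dist v (δ q a b) :=
  if_neg hq

lemma smul_Δop_le {c : ℝ} (hc0 : 0 ≤ c) (hc1 : c ≤ 1) (v : Q → ℝ) :
    c • Δop δ dist T v ≤ Δop δ dist T (c • v) := fun q => by
  by_cases hq : q = T
  · simpa [hq, Δop_self] using hc1
  · simp only [Pi.smul_apply, smul_eq_mul, Δop_of_ne hq, lift_smul, valGF_smul hc0, le_refl]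

variable [Nonempty B]

lemma Δop_mono : Monotone (Δop δ dist T) := fun v w h q => by
  by_cases hq : q = T
  · rw [hq, Δop_self, Δop_self]
  · rw [Δop_of_ne hq, Δop_of_ne hq]
    exact valGF_mono fun a b => lift_mono dist h _

variable [Nonempty A]

lemma Δop_nonneg {v : Q → ℝ} (hv : 0 ≤ v) : 0 ≤ Δop δ dist T v := by
  refine le_trans (fun q => ?_) (Δop_mono hv)
  by_cases hq : q = T
  · rw [hq, Δop_self]
    exact zero_le_one
  · simp only [Δop_of_ne hq, lift_zero, valGF_const, Pi.zero_apply, le_refl]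

lemma Δop_add_const_le {c : ℝ} (hc : 0 ≤ c) (v : Q → ℝ) (q : Q) :
    Δop δ dist T (fun q => v q + c) q ≤ Δop δ dist T v q + c := by
  by_cases hq : q = T
  · rw [hq, Δop_self, Δop_self]
    linarith
  · simp only [Δop_of_ne hq, lift_add_const, valGF_add_const, le_refl]

lemma lipschitzWith_Δop : LipschitzWith 1 (Δop δ dist T) := by
  refine LipschitzWith.of_dist_le_mul fun v w => ?_
  rw [NNReal.coe_one, one_mul, dist_pi_le_iff dist_nonneg]
  intro q
  have hcoord : LipschitzWith 1 fun v => Δop δ dist T v q := by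
    refine LipschitzWith.of_le_add fun v w => ?_
    have hvw : v ≤ fun q' => w q' + Dist.dist v w := fun q' => by
      have := (Real.dist_eq (v q') (w q')).symm.trans_le (dist_le_pi_dist v w q')
      linarith [le_abs_self (v q' - w q')]
    exact (Δop_mono hvw q).trans (Δop_add_const_le dist_nonneg w q)
  simpa using hcoord.dist_le_mul v w

end Delta

section Kleene

variable {A B Q D : Type} [Fintype A] [Fintype B] [Fintype Q] [Nonempty B]
  {δ : Q → A → B → D} {dist : D → FDist Q} {T : Q}

lemma iterate_Δop_zero_le {w : Q → ℝ} (hw0 : 0 ≤ w) (hw : Δop δ dist T w ≤ w) (n : ℕ) :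
    (Δop δ dist T)^[n] 0 ≤ w := by
  induction n with
  | zero => exact hw0
  | succ n ih =>
    rw [Function.iterate_succ_apply']
    exact (Δop_mono ih).trans hw

variable [Nonempty A]

lemma monotone_iterate_Δop_zero : Monotone fun n => (Δop δ dist T)^[n] 0 :=
  Δop_mono.monotone_iterate_of_le_map (Δop_nonneg le_rfl)

lemma tendsto_iterate_Δop_zero {m : Q → ℝ} (hm : IsLfpDelta δ dist T m) :
    Tendsto (fun n => (Δop δ dist T)^[n] 0) atTop (𝓝 m) := by
  obtain ⟨hm01, hfix, hleast⟩ := hm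
  set u : ℕ → Q → ℝ := fun n => (Δop δ dist T)^[n] 0
  have hum : ∀ n, u n ≤ m := iterate_Δop_zero_le (fun q => (hm01 q).1) hfix.le
  have hbdd : BddAbove (Set.range u) := ⟨m, Set.forall_mem_range.2 hum⟩
  have hlim := tendsto_atTop_ciSup monotone_iterate_Δop_zero hbdd
  have hsm : ⨆ n, u n ≤ m := ciSup_le hum
  have hs_fix : Δop δ dist T (⨆ n, u n) = ⨆ n, u n := by
    refine tendsto_nhds_unique ((lipschitzWith_Δop.continuous.tendsto _).comp hlim) ?_
    simpa only [u, Function.comp_def, ← Function.iterate_succ_apply'] using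
      hlim.comp (tendsto_add_atTop_nat 1)
  have hms : m ≤ ⨆ n, u n :=
    hleast _ (fun q => ⟨le_ciSup hbdd 0 q, (hsm q).trans (hm01 q).2⟩) hs_fix
  rwa [le_antisymm hsm hms] at hlim

end Kleene

section Discount

variable {Q : Type} {G : Set Q} {m : Q → ℝ} {c : ℝ} {f : (Q → ℝ) → Q → ℝ}

def discountOff (G : Set Q) (m : Q → ℝ) (c : ℝ) (f : (Q → ℝ) → Q → ℝ)
    (v : Q → ℝ) : Q → ℝ :=
  G.piecewise m (c • f v)

lemma discountOff_of_mem {q : Q} (hq : q ∈ G) (v : Q → ℝ) : discountOff G m c f v q = m q :=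
  Set.piecewise_eq_of_mem _ _ _ hq

lemma discountOff_of_notMem {q : Q} (hq : q ∉ G) (v : Q → ℝ) :
    discountOff G m c f v q = c * f v q :=
  Set.piecewise_eq_of_notMem _ _ _ hq

lemma monotone_discountOff (hf : Monotone f) (hc : 0 ≤ c) : Monotone (discountOff G m c f) :=
  fun v w h q => by
    by_cases hq : q ∈ G
    · rw [discountOff_of_mem hq, discountOff_of_mem hq]
    · rw [discountOff_of_notMem hq, discountOff_of_notMem hq]
      exact mul_le_mul_of_nonneg_left (hf h q) hc

lemma contractingWith_discountOff [Fintype Q] (hf : LipschitzWith 1 f) (hc0 : 0 ≤ c)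
    (hc1 : c < 1) : ContractingWith c.toNNReal (discountOff G m c f) := by
  refine ⟨by simpa using hc1, LipschitzWith.of_dist_le_mul fun v w => ?_⟩
  rw [Real.coe_toNNReal _ hc0, dist_pi_le_iff (by positivity)]
  intro q
  by_cases hq : q ∈ G
  · rw [discountOff_of_mem hq, discountOff_of_mem hq, dist_self]
    positivity
  · rw [discountOff_of_notMem hq, discountOff_of_notMem hq, Real.dist_eq, ← mul_sub, abs_mul,
      abs_of_nonneg hc0, ← Real.dist_eq]
    gcongr
    exact (dist_le_pi_dist _ _ q).trans (by simpa using hf.dist_le_mul v w)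

lemma discountOff_le_self (hfm : f m ≤ m) (hm : 0 ≤ m) (hc0 : 0 ≤ c) (hc1 : c ≤ 1) :
    discountOff G m c f m ≤ m := fun q => by
  by_cases hq : q ∈ G
  · rw [discountOff_of_mem hq]
  · rw [discountOff_of_notMem hq]
    calc c * f m q ≤ c * m q := mul_le_mul_of_nonneg_left (hfm q) hc0
      _ ≤ m q := mul_le_of_le_one_left (hm q) hc1

lemma smul_le_discountOff (hf : Monotone f) (hfm : f m ≤ m) (hc1 : c ≤ 1) {y : Q → ℝ}
    (hy : y ≤ m) (hfy : 0 ≤ f y) : c • f y ≤ discountOff G m c f y := fun q => by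
  by_cases hq : q ∈ G
  · rw [discountOff_of_mem hq, Pi.smul_apply, smul_eq_mul]
    calc c * f y q ≤ f y q := mul_le_of_le_one_left (hfy q) hc1
      _ ≤ f m q := hf hy q
      _ ≤ m q := hfm q
  · rw [discountOff_of_notMem hq, Pi.smul_apply, smul_eq_mul]

end Discount

section DiscountedFixedPoint

variable {A B Q D : Type} [Fintype A] [Fintype B] [Fintype Q] [Nonempty A] [Nonempty B]
  {δ : Q → A → B → D} {dist : D → FDist Q} {T : Q}

theorem exists_discounted_fixedPoint {m : Q → ℝ} (hm : IsLfpDelta δ dist T m) (G : Set Q)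
    {c : ℝ} (hc0 : 0 ≤ c) (hc1 : c < 1) :
    ∃ v : Q → ℝ, 0 ≤ v ∧ v ≤ m ∧ (∀ q ∈ G, v q = m q) ∧
      (∀ q ∉ G, v q = c * Δop δ dist T v q) ∧
      ∀ n, c ^ n • (Δop δ dist T)^[n] 0 ≤ v := by
  obtain ⟨hm01, hfix, -⟩ := hm
  have hm0 : 0 ≤ m := fun q => (hm01 q).1
  set Γ := discountOff G m c (Δop δ dist T)
  have hΓ : ContractingWith c.toNNReal Γ := contractingWith_discountOff lipschitzWith_Δop hc0 hc1
  have hΓ_mono : Monotone Γ := monotone_discountOff Δop_mono hc0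
  have hΓ_ge {y : Q → ℝ} (hy0 : 0 ≤ y) (hym : y ≤ m) : c • Δop δ dist T y ≤ Γ y :=
    smul_le_discountOff Δop_mono hfix.le hc1.le hym (Δop_nonneg hy0)
  set v := ContractingWith.fixedPoint Γ hΓ
  have hv : Γ v = v := hΓ.fixedPoint_isFixedPt
  have hv0 : 0 ≤ v := hΓ.le_fixedPoint_of_le_map hΓ_mono <|
    (smul_nonneg hc0 (Δop_nonneg le_rfl)).trans (hΓ_ge le_rfl hm0)
  have hvm : v ≤ m := hΓ.fixedPoint_le_of_map_le hΓ_mono <|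
    discountOff_le_self hfix.le hm0 hc0 hc1.le
  refine ⟨v, hv0, hvm, fun q hq => ?_, fun q hq => ?_, fun n => ?_⟩
  · exact (congrFun hv q).symm.trans (discountOff_of_mem hq v)
  · exact (congrFun hv q).symm.trans (discountOff_of_notMem hq v)
  · induction n with
    | zero => simpa using hv0
    | succ n ih =>
      have hy0 : 0 ≤ c ^ n • (Δop δ dist T)^[n] 0 :=
        smul_nonneg (pow_nonneg hc0 n) (monotone_iterate_Δop_zero (Nat.zero_le n))
      calc c ^ (n + 1) • (Δop δ dist T)^[n + 1] 0
          = c • c ^ n • Δop δ dist T ((Δop δ dist T)^[n] 0) := by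
            rw [Function.iterate_succ_apply', pow_succ', mul_smul]
        _ ≤ c • Δop δ dist T (c ^ n • (Δop δ dist T)^[n] 0) :=
            smul_le_smul_of_nonneg_left
              (smul_Δop_le (pow_nonneg hc0 n) (pow_le_one₀ hc0 hc1.le) _) hc0
        _ ≤ Γ (c ^ n • (Δop δ dist T)^[n] 0) :=
            hΓ_ge hy0 (ih.trans hvm)
        _ ≤ v := hv ▸ hΓ_mono ih

end DiscountedFixedPoint

end CRG

theorem stmt14_general
    {A B Q D : Type} [Fintype A] [Fintype B] [Fintype Q]
    [Nonempty A] [Nonempty B]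
    (δ : Q → A → B → D) (dist : D → FDist Q) (T : Q)
    (m : Q → ℝ) (hm : CRG.IsLfpDelta δ dist T m)
    (G : Set Q) (hG : ∀ q ∉ G, m q ≠ 0)
    (ε : ℝ) (hε : 0 < ε) :
    ∃ v : Q → ℝ,
      (∀ q, v q ∈ Set.Icc (0:ℝ) 1) ∧ (∀ q, v q ≤ m q) ∧
      (∀ q, |m q - v q| ≤ ε) ∧ (∀ q ∈ G, v q = m q) ∧
      ∀ q ∉ G, v q < CRG.Δop δ dist T v q := by
  have hm01 := hm.1
  set u : ℕ → Q → ℝ := fun n => (CRG.Δop δ dist T)^[n] 0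
  have hu_lim : Tendsto u atTop (𝓝 m) := CRG.tendsto_iterate_Δop_zero hm
  obtain ⟨N, hN⟩ : ∃ N, ∀ q, m q - ε / 2 < u N q :=
    (eventually_all.2 fun q => (tendsto_pi_nhds.1 hu_lim q).eventually
      (lt_mem_nhds (by linarith))).exists
  obtain ⟨c, hcN, hc⟩ : ∃ c : ℝ, 1 - ε / 2 < c ^ N ∧ c ∈ Set.Ioo 0 1 := by
    have hpow : Tendsto (fun c : ℝ => c ^ N) (𝓝[<] 1) (𝓝 1) := by
      simpa using ((continuous_pow N : Continuous fun c : ℝ => c ^ N).tendsto 1).mono_left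
        nhdsWithin_le_nhds
    exact ((hpow.eventually (lt_mem_nhds (by linarith))).and (Ioo_mem_nhdsLT one_pos)).exists
  obtain ⟨v, hv0, hvm, hvG, hv_off, hv_ge⟩ := CRG.exists_discounted_fixedPoint hm G hc.1.le hc.2
  refine ⟨v, fun q => ⟨hv0 q, (hvm q).trans (hm01 q).2⟩, hvm, fun q => ?_, hvG,
    fun q hq => ?_⟩
  · have huN : u N q ≤ 1 :=
      (CRG.monotone_iterate_Δop_zero.ge_of_tendsto hu_lim N q).trans (hm01 q).2
    have hcN1 : c ^ N ≤ 1 := pow_le_one₀ hc.1.le hc.2.le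
    have hvN : c ^ N * u N q ≤ v q := hv_ge N q
    rw [abs_of_nonneg (sub_nonneg.2 (hvm q))]
    linarith [hN q, mul_le_mul_of_nonneg_left huN (sub_nonneg.2 hcN1)]
  · have hmq : 0 < m q := ((hm01 q).1).lt_of_ne' (hG q hq)
    obtain ⟨n, hn⟩ := ((tendsto_pi_nhds.1 hu_lim q).eventually (lt_mem_nhds hmq)).exists
    have hvq : 0 < v q := (mul_pos (pow_pos hc.1 n) hn).trans_le (hv_ge n q)
    rw [hv_off q hq] at hvq ⊢
    exact mul_lt_of_lt_one_left (pos_of_mul_pos_right hvq hc.1.le) hc.2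

/-- given `G ⊆ Q` avoiding the value-0 states of its complement and
ε > 0, there is a valuation `v ⪯ m`, ε-close to `m`, agreeing with `m` on `G`, at
which Δ strictly increases outside `G`. -/
theorem stmt14
    {A B Q D : Type} [Fintype A] [Fintype B] [Fintype Q] [Fintype D]
    [Nonempty A] [Nonempty B] [Nonempty Q] [Nonempty D] [DecidableEq Q]
    (δ : Q → A → B → D) (dist : D → FDist Q) (T : Q)
    (habs : CRG.Absorbing δ dist T)
    (m : Q → ℝ) (hm : CRG.IsLfpDelta δ dist T m)
    (G : Set Q) (hG : ∀ q ∉ G, m q ≠ 0)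
    (ε : ℝ) (hε : 0 < ε) :
    ∃ v : Q → ℝ,
      (∀ q, v q ∈ Set.Icc (0:ℝ) 1) ∧ (∀ q, v q ≤ m q) ∧
      (∀ q, |m q - v q| ≤ ε) ∧ (∀ q ∈ G, v q = m q) ∧
      ∀ q ∉ G, v q < CRG.Δop δ dist T v q :=
  stmt14_general δ dist T m hm G hG ε hε
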